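/- Let f be a bicritical rational map on the Riemann sphere of degree d, and let p be a prime number that does not divide d. Then for every natural number k, the group Deck(f^k) contains no element of order p. -/

import Mathlib

open Polynomial OnePoint Function

noncomputable section

abbrev RSphere : Type := OnePoint ℂ

namespace RSphere

def mApply (a b c d : ℂ) : RSphere → RSphere := fun z =>
  match z with
  | ∞ => if c = 0 then ∞ else ((a / c : ℂ) : RSphere)
  | (x : ℂ) => if c * x + d = 0 then ∞ else (((a * x + b) / (c * x + d) : ℂ) : RSphere)

@[simp] lemma mApply_infty (a b c d : ℂ) :
    mApply a b c d ∞ = if c = 0 then ∞ else ((a / c : ℂ) : RSphere) := rfl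

@[simp] lemma mApply_coe (a b c d : ℂ) (x : ℂ) :
    mApply a b c d (x : RSphere) =
      if c * x + d = 0 then ∞ else (((a * x + b) / (c * x + d) : ℂ) : RSphere) := rfl

def IsMobius (g : RSphere → RSphere) : Prop :=
  ∃ a b c d : ℂ, a * d - b * c ≠ 0 ∧ g = mApply a b c d

lemma mApply_diag {t : ℂ} (ht : t ≠ 0) : mApply t 0 0 t = id := by
  funext z
  induction z using OnePoint.rec with
  | infty => simp
  | coe x => simp [ht]

theorem mApply_comp (a b c d a' b' c' d' : ℂ) (h' : a' * d' - b' * c' ≠ 0) :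
    mApply a b c d ∘ mApply a' b' c' d' =
      mApply (a * a' + b * c') (a * b' + b * d') (c * a' + d * c') (c * b' + d * d') := by
  funext z
  induction z using OnePoint.rec with
  | infty =>
    simp only [comp_apply, mApply_infty]
    rcases eq_or_ne c' 0 with hc' | hc'
    · have ha' : a' ≠ 0 := fun h => h' (by rw [hc', h]; ring)
      rw [if_pos hc', mApply_infty, hc']
      simp only [mul_zero, add_zero]
      rcases eq_or_ne c 0 with hc | hc
      · rw [if_pos hc, hc, zero_mul, if_pos rfl]
      · rw [if_neg hc, if_neg (mul_ne_zero hc ha'), mul_div_mul_right _ _ ha']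
    · rw [if_neg hc', mApply_coe]
      have hd : c * (a' / c') + d = (c * a' + d * c') / c' := by field_simp
      rcases eq_or_ne (c * a' + d * c') 0 with h2 | h2
      · rw [if_pos (by rw [hd, h2, zero_div]), if_pos h2]
      · rw [if_neg (by rw [hd]; exact div_ne_zero h2 hc'), if_neg h2]
        congr 1
        rw [div_eq_div_iff (by rw [hd]; exact div_ne_zero h2 hc') h2]
        field_simp
        try ring
  | coe x =>
    simp only [comp_apply, mApply_coe]
    have key2 : (c * a' + d * c') * x + (c * b' + d * d') =
        c * (a' * x + b') + d * (c' * x + d') := by ring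
    have key1 : (a * a' + b * c') * x + (a * b' + b * d') =
        a * (a' * x + b') + b * (c' * x + d') := by ring
    rcases eq_or_ne (c' * x + d') 0 with h0 | h0
    · have hne : a' * x + b' ≠ 0 := by
        intro h
        apply h'
        have hh : a' * (c' * x + d') - c' * (a' * x + b') = a' * d' - b' * c' := by ring
        rw [← hh, h0, h, mul_zero, mul_zero, sub_zero]
      rw [if_pos h0, mApply_infty]
      rw [show (c * a' + d * c') * x + (c * b' + d * d') = c * (a' * x + b') by
        rw [key2, h0, mul_zero, add_zero]]
      rw [show (a * a' + b * c') * x + (a * b' + b * d') = a * (a' * x + b') by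
        rw [key1, h0, mul_zero, add_zero]]
      rcases eq_or_ne c 0 with hc | hc
      · rw [if_pos hc, if_pos (by rw [hc, zero_mul])]
      · rw [if_neg hc, if_neg (mul_ne_zero hc hne), mul_div_mul_right _ _ hne]
    · rw [if_neg h0, mApply_coe]
      have hq : (a' * x + b') / (c' * x + d') * (c' * x + d') = a' * x + b' := by
        rw [div_mul_eq_mul_div, mul_div_assoc, div_self h0, mul_one]
      have hw : c * ((a' * x + b') / (c' * x + d')) + d =
          ((c * a' + d * c') * x + (c * b' + d * d')) / (c' * x + d') := by
        rw [eq_div_iff h0]; linear_combination c * hq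
      rcases eq_or_ne ((c * a' + d * c') * x + (c * b' + d * d')) 0 with h2 | h2
      · rw [if_pos (by rw [hw, h2, zero_div]), if_pos h2]
      · rw [if_neg (by rw [hw]; exact div_ne_zero h2 h0), if_neg h2]
        congr 1
        rw [div_eq_div_iff (by rw [hw]; exact div_ne_zero h2 h0) h2]
        linear_combination (a * d - b * c) * hq

end RSphere

namespace RSphere

lemma IsMobius.id' : IsMobius (id : RSphere → RSphere) :=
  ⟨1, 0, 0, 1, by norm_num, (mApply_diag one_ne_zero).symm⟩

lemma IsMobius.comp {g h : RSphere → RSphere} (hg : IsMobius g) (hh : IsMobius h) :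
    IsMobius (g ∘ h) := by
  obtain ⟨a, b, c, d, hdet, rfl⟩ := hg
  obtain ⟨a', b', c', d', hdet', rfl⟩ := hh
  refine ⟨_, _, _, _, ?_, mApply_comp a b c d a' b' c' d' hdet'⟩
  have key : (a * a' + b * c') * (c * b' + d * d') - (a * b' + b * d') * (c * a' + d * c')
      = (a * d - b * c) * (a' * d' - b' * c') := by ring
  rw [key]
  exact mul_ne_zero hdet hdet'

lemma mApply_inv_comp {a b c d : ℂ} (h : a * d - b * c ≠ 0) :
    mApply d (-b) (-c) a ∘ mApply a b c d = id := by
  rw [mApply_comp d (-b) (-c) a a b c d h]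
  rw [show d * a + -b * c = a * d - b * c by ring, show d * b + -b * d = 0 by ring,
    show -c * a + a * c = 0 by ring, show -c * b + a * d = a * d - b * c by ring]
  exact mApply_diag h

/-- The deck group of a map `F` of the Riemann sphere: the group of all Möbius
transformations `μ` with `F ∘ μ = F`, as a subgroup of the permutations of the sphere. -/
def deckGroup (F : RSphere → RSphere) : Subgroup (Equiv.Perm RSphere) where
  carrier := {σ | IsMobius ⇑σ ∧ F ∘ ⇑σ = F}
  one_mem' := ⟨by rw [Equiv.Perm.coe_one]; exact IsMobius.id', by rw [Equiv.Perm.coe_one, Function.comp_id]⟩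
  mul_mem' := by
    intro σ τ hσ hτ
    refine ⟨?_, ?_⟩
    · rw [Equiv.Perm.coe_mul]; exact hσ.1.comp hτ.1
    · rw [Equiv.Perm.coe_mul, ← Function.comp_assoc, hσ.2, hτ.2]
  inv_mem' := by
    intro σ hσ
    obtain ⟨⟨a, b, c, d, hdet, hg⟩, hF⟩ := hσ
    have hinv : ⇑σ⁻¹ = mApply d (-b) (-c) a := by
      funext x
      have h1 : mApply d (-b) (-c) a ∘ ⇑σ = id := by rw [hg]; exact mApply_inv_comp hdet
      have h2 := congrFun h1 (σ⁻¹ x)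
      simp only [comp_apply, (show σ (σ⁻¹ x) = x from σ.apply_symm_apply x), id_eq] at h2
      exact h2.symm
    constructor
    · exact ⟨d, -b, -c, a, by rw [show d * a - -b * -c = a * d - b * c by ring]; exact hdet, hinv⟩
    · funext x
      have h3 := congrFun hF (σ⁻¹ x)
      simp only [comp_apply, (show σ (σ⁻¹ x) = x from σ.apply_symm_apply x)] at h3
      exact h3.symm

end RSphere

/-- A rational map of the Riemann sphere, given by a pair of coprime polynomials. -/
structure RatMap where
  num : Polynomial ℂ
  den : Polynomial ℂ
  coprime : IsCoprime num den

namespace RatMap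

open RSphere

/-- The (topological) degree of a rational map. -/
def degree (f : RatMap) : ℕ := max f.num.natDegree f.den.natDegree

/-- Evaluation of a rational map at a point of the Riemann sphere. -/
def eval (f : RatMap) : RSphere → RSphere := fun z =>
  match z with
  | ∞ =>
      if f.den.degree < f.num.degree then ∞
      else if f.num.degree < f.den.degree then ((0 : ℂ) : RSphere)
      else ((f.num.leadingCoeff / f.den.leadingCoeff : ℂ) : RSphere)
  | (x : ℂ) =>
      if f.den.eval x = 0 then ∞ else ((f.num.eval x / f.den.eval x : ℂ) : RSphere)

/-- The polynomial whose finite roots (with multiplicity) form the fiber of `f` over `w`. -/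
def fiberPoly (f : RatMap) (w : RSphere) : Polynomial ℂ :=
  match w with
  | ∞ => f.den
  | (c : ℂ) => f.num - Polynomial.C c * f.den

/-- The local degree of a rational map at a point of the Riemann sphere: the multiplicity
of the point in the fiber over its image. -/
def localDegree (f : RatMap) (z : RSphere) : ℕ :=
  match z with
  | ∞ => f.degree - (f.fiberPoly (f.eval ∞)).natDegree
  | (x : ℂ) => (f.fiberPoly (f.eval (x : RSphere))).rootMultiplicity x

/-- The set of critical points of a rational map. -/
def criticalPoints (f : RatMap) : Set RSphere := {z | 2 ≤ f.localDegree z}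

/-- The set of critical values of a rational map. -/
def criticalValues (f : RatMap) : Set RSphere := f.eval '' f.criticalPoints

/-- A rational map is bicritical if it has exactly two critical points. -/
def Bicritical (f : RatMap) : Prop := f.criticalPoints.encard = 2

/-- The local degree of the iterate `f^k` at `z` (computed by the chain rule for
local degrees). -/
def localDegreeIter (f : RatMap) (k : ℕ) (z : RSphere) : ℕ :=
  ∏ j ∈ Finset.range k, f.localDegree (f.eval^[j] z)

/-- The power map `z ↦ z ^ d` on the Riemann sphere. -/
def powMap (d : ℕ) : RSphere → RSphere := fun z =>
  match z with
  | ∞ => ∞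
  | (x : ℂ) => ((x ^ d : ℂ) : RSphere)

/-- The power map `z ↦ z ^ (-d)` on the Riemann sphere. -/
def powMapNeg (d : ℕ) : RSphere → RSphere := fun z =>
  match z with
  | ∞ => ((0 : ℂ) : RSphere)
  | (x : ℂ) => if x = 0 then ∞ else (((x ^ d)⁻¹ : ℂ) : RSphere)

/-- A rational map of degree `d` is a power map if it is Möbius-conjugate to
`z ↦ z ^ d` or to `z ↦ z ^ (-d)`. -/
def IsPowerMap (f : RatMap) : Prop :=
  ∃ g h : RSphere → RSphere, IsMobius g ∧ IsMobius h ∧ g ∘ h = id ∧ h ∘ g = id ∧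
    (g ∘ f.eval ∘ h = powMap f.degree ∨ g ∘ f.eval ∘ h = powMapNeg f.degree)

/-- The deck group `Deck(f^k)` of the `k`-th iterate of `f`, with the convention
`Deck(f^0) = {id}`. -/
def deckIter (f : RatMap) (k : ℕ) : Subgroup (Equiv.Perm RSphere) :=
  if k = 0 then ⊥ else deckGroup (f.eval^[k])

/-- `Deck*(f^k) = Deck(f^k) \ Deck(f^{k-1})`, with the convention `Deck*(f^0) = {id}`. -/
def deckStar (f : RatMap) (k : ℕ) : Set (Equiv.Perm RSphere) :=
  if k = 0 then {1}
  else (deckIter f k : Set (Equiv.Perm RSphere)) \ (deckIter f (k - 1) : Set (Equiv.Perm RSphere))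

/-- A bicritical rational map with critical values `v₁ ≠ v₂` is critically coalescing
if `f(v₁) = f(v₂)`. -/
def CriticallyCoalescing (f : RatMap) : Prop :=
  ∃ v₁ v₂ : RSphere, v₁ ≠ v₂ ∧ f.criticalValues = {v₁, v₂} ∧ f.eval v₁ = f.eval v₂

end RatMap

/-- A group is dihedral if it is isomorphic to `D_{2n}` for some `n ≥ 2` (the Klein
four-group `V₄ = D₄` counts as dihedral). -/
def IsDihedral (G : Type*) [Group G] : Prop :=
  ∃ n : ℕ, 2 ≤ n ∧ Nonempty (G ≃* DihedralGroup n)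



namespace DeckAux

open RatMap RSphere

/-- The Wronskian of the two coprime polynomials of a rational map of positive
degree is nonzero. -/
lemma wronskian_ne_zero (f : RatMap) (hD : 1 ≤ f.degree) :
    f.num * derivative f.den - derivative f.num * f.den ≠ 0 := by
  intro h
  have h' : f.num * derivative f.den = derivative f.num * f.den := sub_eq_zero.mp h
  rcases eq_or_ne f.den 0 with hQ | hQ
  · have hu : IsUnit f.num := isCoprime_zero_right.mp (hQ ▸ f.coprime)
    have h1 : f.num.natDegree = 0 := natDegree_eq_zero_of_isUnit hu
    have h2 : f.degree = 0 := by simp [RatMap.degree, h1, hQ]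
    omega
  · have hdvd : f.den ∣ derivative f.den := by
      refine (f.coprime.symm).dvd_of_dvd_mul_left ?_
      exact ⟨derivative f.num, by linear_combination h⟩
    have hd0 : derivative f.den = 0 :=
      Polynomial.eq_zero_of_dvd_of_degree_lt hdvd (Polynomial.degree_derivative_lt hQ)
    have hn0 : derivative f.num = 0 := by
      rw [hd0, mul_zero] at h'
      rcases mul_eq_zero.mp h'.symm with h1 | h1
      · exact h1
      · exact absurd h1 hQ
    have e1 : f.num.natDegree = 0 := natDegree_eq_zero_of_derivative_eq_zero hn0
    have e2 : f.den.natDegree = 0 := natDegree_eq_zero_of_derivative_eq_zero hd0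
    have : f.degree = 0 := by simp [RatMap.degree, e1, e2]
    omega

lemma natDegree_fiber (f : RatMap) (hD : 1 ≤ f.degree) (c : ℂ) (hc0 : c ≠ 0)
    (hclc : c ≠ f.num.leadingCoeff / f.den.leadingCoeff) :
    (f.num - C c * f.den).natDegree = f.degree := by
  rcases lt_trichotomy f.num.natDegree f.den.natDegree with h | h | h
  · have hQ0 : f.den ≠ 0 := fun h0 => by simp [h0] at h
    have hdeg : (f.num - C c * f.den).degree = (C c * f.den).degree :=
      Polynomial.degree_sub_eq_right_of_degree_lt
        (by rw [Polynomial.degree_C_mul hc0]; exact Polynomial.degree_lt_degree h)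
    have : (f.num - C c * f.den).natDegree = (C c * f.den).natDegree :=
      Polynomial.natDegree_eq_of_degree_eq hdeg
    rw [this, Polynomial.natDegree_C_mul hc0, RatMap.degree, max_eq_right (le_of_lt h)]
  · -- equal natDegrees
    have hn : f.degree = f.num.natDegree := by rw [RatMap.degree, h, max_self]
    have hP0 : f.num ≠ 0 := by
      intro h0
      rw [RatMap.degree, h, max_self, ← h, h0, Polynomial.natDegree_zero] at hD
      omega
    have hQ0 : f.den ≠ 0 := by
      intro h0
      rw [RatMap.degree, ← h, max_self, h, h0, Polynomial.natDegree_zero] at hD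
      omega
    have hlcQ : f.den.leadingCoeff ≠ 0 := Polynomial.leadingCoeff_ne_zero.mpr hQ0
    have hcoeff : (f.num - C c * f.den).coeff f.num.natDegree ≠ 0 := by
      rw [Polynomial.coeff_sub, Polynomial.coeff_C_mul]
      have e1 : f.num.coeff f.num.natDegree = f.num.leadingCoeff := rfl
      have e2 : f.den.coeff f.num.natDegree = f.den.leadingCoeff := by rw [h]; rfl
      rw [e1, e2]
      intro h0
      apply hclc
      field_simp
      linear_combination -h0
    have hle : (f.num - C c * f.den).natDegree ≤ f.num.natDegree := by
      refine le_trans (Polynomial.natDegree_sub_le _ _) ?_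
      exact max_le le_rfl (le_trans (Polynomial.natDegree_C_mul_le c f.den) (le_of_eq h.symm))
    have hge : f.num.natDegree ≤ (f.num - C c * f.den).natDegree :=
      Polynomial.le_natDegree_of_ne_zero hcoeff
    omega
  · have hP0 : f.num ≠ 0 := fun h0 => by simp [h0] at h
    have hdeg : (f.num - C c * f.den).degree = f.num.degree := by
      refine Polynomial.degree_sub_eq_left_of_degree_lt ?_
      calc (C c * f.den).degree = f.den.degree := Polynomial.degree_C_mul hc0
        _ < f.num.degree := Polynomial.degree_lt_degree h
    have : (f.num - C c * f.den).natDegree = f.num.natDegree :=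
      Polynomial.natDegree_eq_of_degree_eq hdeg
    rw [this, RatMap.degree, max_eq_left (le_of_lt h)]

lemma eval_coe_eq_coe_iff (f : RatMap) (x c : ℂ) :
    f.eval (x : RSphere) = (c : RSphere) ↔ (f.num - C c * f.den).eval x = 0 := by
  have hcop : ¬ (f.num.eval x = 0 ∧ f.den.eval x = 0) := by
    rintro ⟨h1, h2⟩
    have := f.coprime.map (Polynomial.evalRingHom x)
    simp only [Polynomial.coe_evalRingHom, h1, h2] at this
    exact not_isUnit_zero (isCoprime_zero_right.mp this)
  have heval : f.eval (x : RSphere) =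
      if f.den.eval x = 0 then ∞ else ((f.num.eval x / f.den.eval x : ℂ) : RSphere) := rfl
  constructor
  · intro h
    rw [heval] at h
    rcases eq_or_ne (f.den.eval x) 0 with hQ | hQ
    · rw [if_pos hQ] at h
      exact absurd h (OnePoint.infty_ne_coe c)
    · rw [if_neg hQ] at h
      have h2 : f.num.eval x / f.den.eval x = c := OnePoint.coe_injective h
      have h3 : f.num.eval x = c * f.den.eval x := by
        rw [div_eq_iff hQ] at h2
        exact h2
      simp [Polynomial.eval_sub, Polynomial.eval_mul, h3]
  · intro h
    simp only [Polynomial.eval_sub, Polynomial.eval_mul, Polynomial.eval_C, sub_eq_zero] at h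
    have hQ : f.den.eval x ≠ 0 := by
      intro h0
      exact hcop ⟨by rw [h, h0, mul_zero], h0⟩
    rw [heval, if_neg hQ]
    congr 1
    rw [h]
    field_simp

lemma exists_good_fiber (f : RatMap) (hD : 1 ≤ f.degree) :
    ∃ B : Set RSphere, B.Finite ∧ ∞ ∈ B ∧ ∀ w ∉ B,
      (f.eval ⁻¹' {w}).Finite ∧ (f.eval ⁻¹' {w}).ncard = f.degree := by
  classical
  set W : Polynomial ℂ := f.num * derivative f.den - derivative f.num * f.den with hWdef
  have hWne : W ≠ 0 := wronskian_ne_zero f hD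
  set badC : Set ℂ := {0, f.num.leadingCoeff / f.den.leadingCoeff} ∪
      (fun x => f.num.eval x / f.den.eval x) '' {x | W.IsRoot x} with hbadC
  have hbadfin : badC.Finite := by
    refine Set.Finite.union ((Set.finite_singleton _).insert _) ?_
    exact (Polynomial.finite_setOf_isRoot hWne).image _
  refine ⟨(fun c : ℂ => (c : RSphere)) '' badC ∪ {∞, f.eval ∞},
    (hbadfin.image _).union ((Set.finite_singleton _).insert _),
    Or.inr (Set.mem_insert _ _), ?_⟩
  intro w hw
  have hwinf : w ≠ ∞ := fun h => hw (Or.inr (Set.mem_insert_iff.mpr (Or.inl h)))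
  obtain ⟨c, rfl⟩ : ∃ c : ℂ, w = (c : RSphere) := by
    induction w using OnePoint.rec with
    | infty => exact absurd rfl hwinf
    | coe x => exact ⟨x, rfl⟩
  have hc1 : c ∉ badC := fun h => hw (Or.inl ⟨c, h, rfl⟩)
  have hc2 : f.eval ∞ ≠ (c : RSphere) := by
    intro h
    exact hw (Or.inr (Set.mem_insert_iff.mpr (Or.inr (by rw [h]; rfl))))
  have hc0 : c ≠ 0 := fun h => hc1 (Or.inl (Set.mem_insert_iff.mpr (Or.inl h)))
  have hclc : c ≠ f.num.leadingCoeff / f.den.leadingCoeff :=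
    fun h => hc1 (Or.inl (Set.mem_insert_iff.mpr (Or.inr h)))
  set R : Polynomial ℂ := f.num - C c * f.den with hRdef
  have hnd : R.natDegree = f.degree := natDegree_fiber f hD c hc0 hclc
  have hRne : R ≠ 0 := by
    intro h0
    rw [h0, Polynomial.natDegree_zero] at hnd
    omega
  -- fiber description
  have hfib : f.eval ⁻¹' {(c : RSphere)} = (fun x : ℂ => (x : RSphere)) '' {x | R.IsRoot x} := by
    ext z
    induction z using OnePoint.rec with
    | infty =>
      simp only [Set.mem_preimage, Set.mem_singleton_iff, Set.mem_image]
      constructor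
      · intro h; exact absurd h hc2
      · rintro ⟨x, _, h⟩; exact absurd h (OnePoint.coe_ne_infty x)
    | coe x =>
      simp only [Set.mem_preimage, Set.mem_singleton_iff, Set.mem_image]
      rw [eval_coe_eq_coe_iff]
      constructor
      · intro h; exact ⟨x, h, rfl⟩
      · rintro ⟨y, hy, h⟩
        have := OnePoint.coe_injective h
        rwa [this] at hy
  -- separability
  have hsep : R.Separable := by
    rw [Polynomial.Separable, Polynomial.isCoprime_iff_aeval_ne_zero_of_isAlgClosed ℂ ℂ R (derivative R)]
    intro a
    by_contra hcon
    push_neg at hcon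
    obtain ⟨h1, h2⟩ := hcon
    rw [Polynomial.coe_aeval_eq_eval] at h1 h2
    have hR' : derivative R = derivative f.num - C c * derivative f.den := by
      rw [hRdef]
      simp [Polynomial.derivative_sub, Polynomial.derivative_C_mul]
    rw [hR'] at h2
    rw [hRdef] at h1
    simp only [Polynomial.eval_sub, Polynomial.eval_mul, Polynomial.eval_C] at h1 h2
    have hP : f.num.eval a = c * f.den.eval a := by linear_combination h1
    have hP' : (derivative f.num).eval a = c * (derivative f.den).eval a := by
      linear_combination h2
    have hWa : W.IsRoot a := by
      rw [hWdef]
      simp only [Polynomial.IsRoot, Polynomial.eval_sub, Polynomial.eval_mul]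
      rw [hP, hP']
      ring
    have hQ : f.den.eval a ≠ 0 := by
      intro h0
      have hz : f.num.eval a = 0 := by rw [hP, h0, mul_zero]
      have := f.coprime.map (Polynomial.evalRingHom a)
      simp only [Polynomial.coe_evalRingHom, hz, h0] at this
      exact not_isUnit_zero (isCoprime_zero_right.mp this)
    apply hc1
    refine Or.inr ⟨a, hWa, ?_⟩
    show f.num.eval a / f.den.eval a = c
    rw [hP, mul_div_assoc, div_self hQ, mul_one]
  have hnodup : R.roots.Nodup := R.nodup_roots hsep
  have hcard : R.roots.card = R.natDegree :=
    Polynomial.splits_iff_card_roots.mp (IsAlgClosed.splits R)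
  have hset : {x | R.IsRoot x} = ↑R.roots.toFinset := by
    ext x
    simp [Polynomial.mem_roots, hRne]
  rw [hfib, hset]
  constructor
  · exact (R.roots.toFinset.finite_toSet).image _
  · rw [Set.ncard_image_of_injective _ OnePoint.coe_injective, Set.ncard_coe_finset,
      Multiset.toFinset_card_of_nodup hnodup, hcard, hnd]

lemma exists_good_fiber_iter (f : RatMap) (hD : 1 ≤ f.degree) (k : ℕ) :
    ∃ B : Set RSphere, B.Finite ∧ ∀ w ∉ B,
      (f.eval^[k] ⁻¹' {w}).Finite ∧ (f.eval^[k] ⁻¹' {w}).ncard = f.degree ^ k := by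
  classical
  induction k with
  | zero =>
    refine ⟨∅, Set.finite_empty, fun w _ => ?_⟩
    simp [Set.preimage_id']
  | succ k ih =>
    obtain ⟨B, hBfin, hB⟩ := ih
    obtain ⟨B1, h1fin, _, h1⟩ := exists_good_fiber f hD
    refine ⟨B1 ∪ f.eval '' B, h1fin.union (hBfin.image _), ?_⟩
    intro w hw
    have hw1 : w ∉ B1 := fun h => hw (Or.inl h)
    obtain ⟨hfin1, hcard1⟩ := h1 w hw1
    set t : Finset RSphere := hfin1.toFinset with ht
    have htmem : ∀ y, y ∈ t ↔ f.eval y = w := by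
      intro y
      rw [ht, Set.Finite.mem_toFinset]
      rfl
    have htB : ∀ y ∈ t, y ∉ B := by
      intro y hy hyB
      exact hw (Or.inr ⟨y, hyB, (htmem y).mp hy⟩)
    set Fset : RSphere → Finset RSphere := fun y =>
      if h : (f.eval^[k] ⁻¹' {y}).Finite then h.toFinset else ∅ with hFset
    have hFsetSpec : ∀ y ∈ t, (↑(Fset y) : Set RSphere) = f.eval^[k] ⁻¹' {y} ∧
        (Fset y).card = f.degree ^ k := by
      intro y hy
      obtain ⟨hfy, hcy⟩ := hB y (htB y hy)
      rw [hFset]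
      simp only [dif_pos hfy]
      refine ⟨hfy.coe_toFinset, ?_⟩
      rw [← Set.ncard_eq_toFinset_card _ hfy, hcy]
    have hbig : (↑(t.biUnion Fset) : Set RSphere) = f.eval^[k + 1] ⁻¹' {w} := by
      rw [Function.iterate_succ' f.eval k, Set.preimage_comp]
      rw [show f.eval ⁻¹' {w} = ↑t by rw [ht, Set.Finite.coe_toFinset]]
      rw [← Set.biUnion_preimage_singleton]
      rw [Finset.coe_biUnion]
      apply Set.iUnion₂_congr
      intro y hy
      exact (hFsetSpec y hy).1
    have hdisj : ∀ y₁ ∈ t, ∀ y₂ ∈ t, y₁ ≠ y₂ → Disjoint (Fset y₁) (Fset y₂) := by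
      intro y₁ h₁ y₂ h₂ hne
      rw [Finset.disjoint_left]
      intro z hz₁ hz₂
      have e₁ : z ∈ f.eval^[k] ⁻¹' {y₁} := by rw [← (hFsetSpec y₁ h₁).1]; exact_mod_cast hz₁
      have e₂ : z ∈ f.eval^[k] ⁻¹' {y₂} := by rw [← (hFsetSpec y₂ h₂).1]; exact_mod_cast hz₂
      exact hne (e₁.symm.trans e₂)
    have hcardbig : (t.biUnion Fset).card = f.degree ^ (k + 1) := by
      rw [Finset.card_biUnion hdisj]
      rw [Finset.sum_congr rfl (fun y hy => (hFsetSpec y hy).2)]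
      rw [Finset.sum_const, smul_eq_mul]
      have htc : t.card = f.degree := by
        rw [ht, ← Set.ncard_eq_toFinset_card _ hfin1, hcard1]
      rw [htc, pow_succ, mul_comm]
    constructor
    · rw [← hbig]; exact (t.biUnion Fset).finite_toSet
    · rw [← hbig, Set.ncard_coe_finset, hcardbig]

lemma fix_finite {σ : Equiv.Perm RSphere} (hmob : IsMobius ⇑σ) (hne : σ ≠ 1) :
    {z : RSphere | σ z = z}.Finite := by
  obtain ⟨a, b, c, d, hdet, hg⟩ := hmob
  set q : Polynomial ℂ := C c * Polynomial.X ^ 2 + C (d - a) * Polynomial.X - C b with hq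
  have hqne : q ≠ 0 := by
    intro h0
    have hc : c = 0 := by
      have := congrArg (fun p => Polynomial.coeff p 2) h0
      simpa [hq] using this
    have hda : d - a = 0 := by
      have := congrArg (fun p => Polynomial.coeff p 1) h0
      simpa [hq, hc] using this
    have hb : b = 0 := by
      have := congrArg (fun p => Polynomial.coeff p 0) h0
      simpa [hq, hc] using this
    have hd : d = a := by linear_combination hda
    have ha : a ≠ 0 := by
      intro h1
      apply hdet
      rw [h1, hd, h1, hb]; ring
    apply hne
    ext z
    have : ⇑σ = id := by rw [hg, hb, hc, hd, mApply_diag ha]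
    rw [this]; rfl
  have hsub : {z : RSphere | σ z = z} ⊆
      insert ∞ ((fun x : ℂ => (x : RSphere)) '' {x | q.IsRoot x}) := by
    intro z hz
    induction z using OnePoint.rec with
    | infty => exact Set.mem_insert _ _
    | coe x =>
      refine Set.mem_insert_iff.mpr (Or.inr ⟨x, ?_, rfl⟩)
      have hx : σ (x : RSphere) = (x : RSphere) := hz
      rw [hg, mApply_coe] at hx
      have hcx : c * x + d ≠ 0 := by
        intro h0
        rw [if_pos h0] at hx
        exact (OnePoint.infty_ne_coe x) hx
      rw [if_neg hcx] at hx
      have h2 : (a * x + b) / (c * x + d) = x := OnePoint.coe_injective hx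
      rw [div_eq_iff hcx] at h2
      show q.eval x = 0
      rw [hq]
      simp only [Polynomial.eval_sub, Polynomial.eval_add, Polynomial.eval_mul,
        Polynomial.eval_C, Polynomial.eval_pow, Polynomial.eval_X]
      linear_combination -h2
  exact Set.Finite.subset ((Polynomial.finite_setOf_isRoot hqne).image _ |>.insert ∞) hsub

lemma fixed_point_exists {α : Type*} (p : ℕ) (hp : p.Prime) (σ : Equiv.Perm α)
    (hσp : σ ^ p = 1) (F : Set α) (hmem : ∀ z, z ∈ F ↔ σ z ∈ F)
    (hcard : ¬ p ∣ Nat.card F) : ∃ x ∈ F, σ x = x := by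
  classical
  haveI : Fact p.Prime := ⟨hp⟩
  set τ : Equiv.Perm ↥F := σ.subtypePerm (fun z => (hmem z).symm) with hτ
  have hτp : τ ^ p = 1 := by
    ext x
    simp [hτ, Equiv.Perm.subtypePerm_pow, hσp]
  have hPG : IsPGroup p (Subgroup.zpowers τ) := by
    intro g
    refine ⟨1, ?_⟩
    obtain ⟨g, n, rfl⟩ := g
    have h2 : (τ ^ n) ^ (p ^ 1) = 1 := by
      rw [pow_one, ← zpow_natCast, ← zpow_mul, mul_comm, zpow_mul, zpow_natCast, hτp, one_zpow]
    exact Subtype.ext (by rw [Subgroup.coe_pow]; exact h2)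
  obtain ⟨x, hx⟩ := hPG.nonempty_fixed_point_of_prime_not_dvd_card ↥F hcard
  have h2 : τ x = x := hx ⟨τ, Subgroup.mem_zpowers τ⟩
  exact ⟨x.1, x.2, congrArg Subtype.val h2⟩

end DeckAux


open RSphere in
/-- Let `f` be a bicritical rational map of degree `d`, and let `p` be a prime number
that does not divide `d`. Then for all natural numbers `k`, the group `Deck(f^k)` has
no element of order `p`. -/
theorem deck_no_element_of_prime_order (f : RatMap) (hf : f.Bicritical) (p : ℕ)
    (hp : p.Prime) (hpd : ¬ p ∣ f.degree) (k : ℕ) (hk : 1 ≤ k) :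
    ∀ sigma : ↥(f.deckIter k), orderOf sigma ≠ p := by
  classical
  intro sigma hord
  have hd1 : 1 ≤ f.degree := Nat.pos_of_ne_zero (fun h => hpd (h ▸ dvd_zero p))
  set g : RSphere → RSphere := f.eval^[k] with hg
  have hdeck : f.deckIter k = deckGroup g := by
    rw [RatMap.deckIter, if_neg (by omega)]
  have hmem : (sigma : Equiv.Perm RSphere) ∈ deckGroup g := hdeck ▸ sigma.2
  obtain ⟨hmob, hcomp⟩ := hmem
  set σ : Equiv.Perm RSphere := (sigma : Equiv.Perm RSphere) with hσdef
  have hσp : σ ^ p = 1 := by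
    have h1 : sigma ^ p = 1 := by rw [← hord]; exact pow_orderOf_eq_one sigma
    have h2 := congrArg Subtype.val h1
    simpa using h2
  have hσne : σ ≠ 1 := by
    intro h1
    have h2 : sigma = 1 := Subtype.ext h1
    rw [h2, orderOf_one] at hord
    exact hp.one_lt.ne' hord.symm
  have hFix : {z : RSphere | σ z = z}.Finite := DeckAux.fix_finite hmob hσne
  obtain ⟨B, hBfin, hB⟩ := DeckAux.exists_good_fiber_iter f hd1 k
  have hInf : Infinite RSphere :=
    Infinite.of_injective (fun x : ℂ => (x : RSphere)) OnePoint.coe_injective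
  obtain ⟨w, hw⟩ := (hBfin.union (hFix.image g)).infinite_compl.nonempty
  have hwB : w ∉ B := fun h => hw (Or.inl h)
  obtain ⟨hFfin, hFcard⟩ := hB w hwB
  have hmemF : ∀ z, z ∈ g ⁻¹' {w} ↔ σ z ∈ g ⁻¹' {w} := by
    intro z
    simp only [Set.mem_preimage, Set.mem_singleton_iff]
    rw [show g (σ z) = g z from congrFun hcomp z]
  have hcardF : ¬ p ∣ Nat.card ↥(g ⁻¹' {w}) := by
    rw [Nat.card_coe_set_eq, hFcard]
    intro hdvd
    exact hpd (hp.dvd_of_dvd_pow hdvd)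
  obtain ⟨x, hxF, hxfix⟩ := DeckAux.fixed_point_exists p hp σ hσp _ hmemF hcardF
  exact hw (Or.inr ⟨x, hxfix, hxF⟩)
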